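/- Let c' be a conservative pseudo-carry for (a,b), suppose (a,b) generates a carry chain from i to j, and let k be a position with i ≤ k ≤ j at which c k ≠ c' k (so c k = true and c' k = false). Then: if k < j, the sum bits satisfy s k = false and s' k = true (so s k − s' k = −1 as an error contribution), and if k = j, they satisfy s j = true and s' j = false (so s j − s' j = +1). -/

import Mathlib

/-! The carry generated at `i - 1` (where `a = b = 1`) is propagated unchanged through the
positions `i, …, j - 1` (where `a ≠ b`), so `c = 1` on all of `[i, j]`; hence `c' k = 0`. The sum
bits then differ only through the carry, and inside the chain `a k ⊕ b k = 1` flips both of them,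
while at its end `a j ⊕ b j = 0` does not. -/

/-- The carry sequence: `c 0 = false` and
`c (k+1) = (a k ∧ b k) ∨ (a k ∧ c k) ∨ (b k ∧ c k)`. -/
def carry (a b : ℕ → Bool) : ℕ → Bool
  | 0 => false
  | k + 1 => (a k && b k) || (a k && carry a b k) || (b k && carry a b k)

/-- The true sum bits: `s k = a k ⊕ b k ⊕ c k`. -/
def sumBit (a b : ℕ → Bool) (k : ℕ) : Bool :=
  Bool.xor (Bool.xor (a k) (b k)) (carry a b k)

/-- `(a,b)` generates a carry chain from `i` to `j` (for `1 ≤ i ≤ j ≤ n`):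
`a (i-1) = b (i-1) = true`, `a k ≠ b k` for `i ≤ k ≤ j-1`, and `a j = b j`. -/
def IsCarryChain (n : ℕ) (a b : ℕ → Bool) (i j : ℕ) : Prop :=
  1 ≤ i ∧ i ≤ j ∧ j ≤ n ∧ a (i - 1) = true ∧ b (i - 1) = true ∧
    (∀ k, i ≤ k → k ≤ j - 1 → a k ≠ b k) ∧ a j = b j

/-- The pseudo sum bits: `s' k = a k ⊕ b k ⊕ c' k`. -/
def pseudoSumBit (a b c' : ℕ → Bool) (k : ℕ) : Bool :=
  Bool.xor (Bool.xor (a k) (b k)) (c' k)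

theorem carry_succ_of_both {a b : ℕ → Bool} {k : ℕ} (ha : a k = true) (hb : b k = true) :
    carry a b (k + 1) = true := by
  simp [carry, ha, hb]

theorem carry_succ_of_ne {a b : ℕ → Bool} {k : ℕ} (h : a k ≠ b k) :
    carry a b (k + 1) = carry a b k := by
  cases ha : a k <;> cases hb : b k <;> simp_all [carry]

theorem pseudoSumBit_of_ne {a b : ℕ → Bool} (c' : ℕ → Bool) {k : ℕ} (h : a k ≠ b k) :
    pseudoSumBit a b c' k = !c' k := by
  cases ha : a k <;> cases hb : b k <;> simp_all [pseudoSumBit]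

theorem pseudoSumBit_of_eq {a b : ℕ → Bool} (c' : ℕ → Bool) {k : ℕ} (h : a k = b k) :
    pseudoSumBit a b c' k = c' k := by
  simp [pseudoSumBit, h]

theorem sumBit_eq_pseudoSumBit_carry (a b : ℕ → Bool) :
    sumBit a b = pseudoSumBit a b (carry a b) :=
  rfl

namespace IsCarryChain

variable {n : ℕ} {a b : ℕ → Bool} {i j k : ℕ}

theorem ne_of_lt (h : IsCarryChain n a b i j) (hik : i ≤ k) (hkj : k < j) : a k ≠ b k :=
  h.2.2.2.2.2.1 k hik (by omega)

theorem right_eq (h : IsCarryChain n a b i j) : a j = b j :=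
  h.2.2.2.2.2.2

theorem carry_eq_true (h : IsCarryChain n a b i j) (hik : i ≤ k) (hkj : k ≤ j) :
    carry a b k = true := by
  obtain ⟨hi, -, -, hai, hbi, -, -⟩ := id h
  induction k, hik using Nat.le_induction with
  | base =>
    obtain ⟨m, rfl⟩ := Nat.exists_eq_add_of_lt hi
    exact carry_succ_of_both hai hbi
  | succ m hm ih =>
    rw [carry_succ_of_ne (h.ne_of_lt hm (by omega))]
    exact ih (by omega)

end IsCarryChain

theorem error_position_inside_chain_general
    (n : ℕ) (a b : ℕ → Bool)
    (c' : ℕ → Bool)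
    (i j : ℕ) (hchain : IsCarryChain n a b i j)
    (k : ℕ) (hik : i ≤ k) (hkj : k ≤ j) (hdiff : carry a b k ≠ c' k) :
    carry a b k = true ∧ c' k = false ∧
      (k < j → sumBit a b k = false ∧ pseudoSumBit a b c' k = true) ∧
      (k = j → sumBit a b j = true ∧ pseudoSumBit a b c' j = false) := by
  have hc : carry a b k = true := hchain.carry_eq_true hik hkj
  have hc' : c' k = false := Bool.eq_false_iff.mpr fun h => hdiff (hc.trans h.symm)
  refine ⟨hc, hc', fun hlt => ?_, fun hk => ?_⟩
  · have hab := hchain.ne_of_lt hik hlt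
    simp [sumBit_eq_pseudoSumBit_carry, pseudoSumBit_of_ne _ hab, hc, hc']
  · subst hk
    simp [sumBit_eq_pseudoSumBit_carry, pseudoSumBit_of_eq _ hchain.right_eq, hc, hc']

/-- Inside a carry chain from `i` to `j`, at a position `k` with `c k ≠ c' k`
we have `c k = true`, `c' k = false`, and: if `k < j` then `s k = false` and
`s' k = true` (error contribution `−1`), while if `k = j` then `s j = true` and
`s' j = false` (error contribution `+1`). -/
theorem error_position_inside_chain
    (n : ℕ) (hn : 1 ≤ n) (a b : ℕ → Bool)
    (ha : ∀ k, n ≤ k → a k = false) (hb : ∀ k, n ≤ k → b k = false)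
    (c' : ℕ → Bool) (hc'0 : c' 0 = false)
    (hcons : ∀ k, c' k = true → carry a b k = true)
    (i j : ℕ) (hchain : IsCarryChain n a b i j)
    (k : ℕ) (hik : i ≤ k) (hkj : k ≤ j) (hdiff : carry a b k ≠ c' k) :
    carry a b k = true ∧ c' k = false ∧
      (k < j → sumBit a b k = false ∧ pseudoSumBit a b c' k = true) ∧
      (k = j → sumBit a b j = true ∧ pseudoSumBit a b c' j = false) :=
  error_position_inside_chain_general n a b c' i j hchain k hik hkj hdiff
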